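/- arXiv:1507.00294 — 3 statements merged into one kernel-verified Lean document; each statement's English description precedes it below -/
import Mathlib

section
/- Let U ⊆ ℝ be an open set and let f, g : ℝ → ℝ be locally integrable functions such that g is a weak derivative of f on U. Let η : ℝ → ℝ be smooth, nonnegative, supported in [−1,1], with ∫ η = 1, and set η^ε(x) = ε^{−1} η(x/ε). Then for every compact set K ⊆ U, ∫_K |(η^ε * f)'(x) − g(x)| dx → 0 as ε → 0⁺, i.e. the derivatives of the mollifications converge to g in L^1_loc(U). -/
open MeasureTheory Filter Metric Topology

open scoped ENNReal Convolution

section molAux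
variable {η : ℝ → ℝ}

/-- the scaled mollifier -/
noncomputable def mol (η : ℝ → ℝ) (ε : ℝ) : ℝ → ℝ := fun x => ε⁻¹ * η (ε⁻¹ * x)

lemma mol_tsupport (hη_supp : tsupport η ⊆ Set.Icc (-1) 1) {ε : ℝ} (hε : 0 < ε) :
    tsupport (mol η ε) ⊆ Set.Icc (-ε) ε := by
  apply closure_minimal _ isClosed_Icc
  intro x hx
  have hx' : η (ε⁻¹ * x) ≠ 0 := by
    intro h; simp [mol, h] at hx
  have : ε⁻¹ * x ∈ tsupport η := subset_closure hx'
  have h2 := hη_supp this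
  simp only [Set.mem_Icc] at h2 ⊢
  have e : ε * (ε⁻¹ * x) = x := by field_simp
  constructor
  · nlinarith [mul_le_mul_of_nonneg_left h2.1 hε.le]
  · nlinarith [mul_le_mul_of_nonneg_left h2.2 hε.le]

lemma mol_hcs (hη_supp : tsupport η ⊆ Set.Icc (-1) 1) {ε : ℝ} (hε : 0 < ε) :
    HasCompactSupport (mol η ε) :=
  HasCompactSupport.of_support_subset_isCompact isCompact_Icc
    ((subset_closure).trans (mol_tsupport hη_supp hε))

lemma mol_smooth (hη : ContDiff ℝ (⊤ : ℕ∞) η) (ε : ℝ) : ContDiff ℝ (⊤ : ℕ∞) (mol η ε) :=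
  ContDiff.const_smul (ε⁻¹) (hη.comp (contDiff_const.mul contDiff_id))

lemma mol_cont (hη : ContDiff ℝ (⊤ : ℕ∞) η) (ε : ℝ) : Continuous (mol η ε) :=
  (mol_smooth hη ε).continuous

lemma mol_nonneg (hη_nonneg : ∀ y, 0 ≤ η y) {ε : ℝ} (hε : 0 < ε) (x : ℝ) : 0 ≤ mol η ε x :=
  mul_nonneg (by positivity) (hη_nonneg _)

lemma mol_integrable (hη : ContDiff ℝ (⊤ : ℕ∞) η) (hη_supp : tsupport η ⊆ Set.Icc (-1) 1)
    {ε : ℝ} (hε : 0 < ε) : Integrable (mol η ε) :=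
  (mol_cont hη ε).integrable_of_hasCompactSupport (mol_hcs hη_supp hε)

lemma mol_integral (hη_int : ∫ y, η y = 1) {ε : ℝ} (hε : 0 < ε) :
    ∫ x, mol η ε x = 1 := by
  unfold mol
  rw [MeasureTheory.integral_const_mul, Measure.integral_comp_inv_mul_left η ε]
  rw [abs_of_pos hε, hη_int, smul_eq_mul]
  field_simp

lemma mol_lintegral (hη : ContDiff ℝ (⊤ : ℕ∞) η) (hη_supp : tsupport η ⊆ Set.Icc (-1) 1)
    (hη_nonneg : ∀ y, 0 ≤ η y) (hη_int : ∫ y, η y = 1) {ε : ℝ} (hε : 0 < ε) :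
    ∫⁻ x, ‖mol η ε x‖₊ = 1 := by
  have h := ofReal_integral_eq_lintegral_ofReal (mol_integrable hη hη_supp hε)
    (Eventually.of_forall (mol_nonneg hη_nonneg hε))
  rw [mol_integral hη_int hε] at h
  rw [← lintegral_congr fun x => ?_, ← h]; · simp
  rw [← enorm_eq_nnnorm, Real.enorm_eq_ofReal_abs, abs_of_nonneg (mol_nonneg hη_nonneg hε x)]

/-- `L¹`-bound (Young's inequality) for convolution with the mollifier. -/
lemma mol_young (hη : ContDiff ℝ (⊤ : ℕ∞) η) (hη_supp : tsupport η ⊆ Set.Icc (-1) 1)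
    (hη_nonneg : ∀ y, 0 ≤ η y) (hη_int : ∫ y, η y = 1)
    {ε : ℝ} (hε : 0 < ε)
    {w : ℝ → ℝ} (hw : AEStronglyMeasurable w (volume : Measure ℝ)) :
    ∫⁻ x, ‖∫ t, w t * mol η ε (x - t)‖₊ ≤ ∫⁻ t, ‖w t‖₊ := by
  have hcont : Continuous (mol η ε) := mol_cont hη ε
  have hmeas : AEMeasurable (Function.uncurry fun x t => ((‖w t‖₊ : ℝ≥0∞) * ‖mol η ε (x - t)‖₊))
      ((volume : Measure ℝ).prod volume) := by
    refine AEMeasurable.mul (f := fun p : ℝ × ℝ => (‖w p.2‖₊ : ℝ≥0∞))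
      (g := fun p : ℝ × ℝ => (‖mol η ε (p.1 - p.2)‖₊ : ℝ≥0∞)) ?_ ?_
    · exact (hw.enorm).comp_quasiMeasurePreserving Measure.quasiMeasurePreserving_snd
    · apply Measurable.aemeasurable
      apply Measurable.coe_nnreal_ennreal
      exact (hcont.comp (continuous_fst.sub continuous_snd)).nnnorm.measurable
  calc ∫⁻ x, ‖∫ t, w t * mol η ε (x - t)‖₊
      ≤ ∫⁻ x, ∫⁻ t, (‖w t‖₊ : ℝ≥0∞) * ‖mol η ε (x - t)‖₊ := by
        refine lintegral_mono fun x => ?_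
        refine (enorm_integral_le_lintegral_enorm _).trans_eq ?_
        refine lintegral_congr fun t => ?_
        simp [nnnorm_mul, ENNReal.coe_mul]
        rfl
    _ = ∫⁻ t, ∫⁻ x, (‖w t‖₊ : ℝ≥0∞) * ‖mol η ε (x - t)‖₊ := lintegral_lintegral_swap hmeas
    _ = ∫⁻ t, (‖w t‖₊ : ℝ≥0∞) * ∫⁻ x, ‖mol η ε (x - t)‖₊ := by
        refine lintegral_congr fun t => ?_
        exact lintegral_const_mul' _ _ ENNReal.coe_ne_top
    _ = ∫⁻ t, ‖w t‖₊ := by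
        refine lintegral_congr fun t => ?_
        rw [lintegral_sub_right_eq_self (fun x => (‖mol η ε x‖₊ : ℝ≥0∞)) t,
          mol_lintegral hη hη_supp hη_nonneg hη_int hε, mul_one]

/-- `L¹` convergence of mollifications for continuous compactly supported functions. -/
lemma mol_mid (hη : ContDiff ℝ (⊤ : ℕ∞) η) (hη_supp : tsupport η ⊆ Set.Icc (-1) 1)
    (hη_nonneg : ∀ y, 0 ≤ η y) (hη_int : ∫ y, η y = 1)
    {v : ℝ → ℝ} (hv : Continuous v) (hcv : HasCompactSupport v) :
    Tendsto (fun ε : ℝ => ∫⁻ x, ‖(∫ t, v t * mol η ε (x - t)) - v x‖₊)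
      (𝓝[>] 0) (𝓝 0) := by
  rw [ENNReal.tendsto_nhds_zero]
  intro c hc
  set S : Set ℝ := cthickening 1 (tsupport v) with hS
  have hScompact : IsCompact S := hcv.cthickening
  have hMlt : volume S < ⊤ := hScompact.measure_lt_top
  set M : ℝ≥0∞ := volume S with hM
  set c' : ℝ≥0∞ := min c 1 with hc'
  have hc'0 : c' ≠ 0 := (lt_min hc zero_lt_one).ne'
  have hc't : c' ≠ ⊤ := by simp [hc']
  have hM1t : M + 1 ≠ ⊤ := by simp [hMlt.ne]
  have hdivt : c' / (M + 1) ≠ ⊤ := ne_of_lt (ENNReal.div_lt_top hc't (by simp))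
  have hdiv0 : c' / (M + 1) ≠ 0 := by
    simp [ENNReal.div_eq_zero_iff, hc'0, hM1t]
  set r : ℝ := (c' / (M + 1)).toReal with hr
  have hrpos : 0 < r := ENNReal.toReal_pos hdiv0 hdivt
  obtain ⟨δ', hδ'pos, hδ'⟩ :=
    Metric.uniformContinuous_iff.mp (hcv.uniformContinuous_of_continuous hv) r hrpos
  filter_upwards [Ioo_mem_nhdsGT_of_mem
    (Set.mem_Ico.mpr ⟨le_refl (0:ℝ), lt_min zero_lt_one hδ'pos⟩)] with ε hε
  obtain ⟨hε0, hεlt⟩ := hε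
  have hε1 : ε ≤ 1 := le_of_lt (lt_of_lt_of_le hεlt (min_le_left _ _))
  have hεδ' : ε < δ' := lt_of_lt_of_le hεlt (min_le_right _ _)
  have hmolc : Continuous (mol η ε) := mol_cont hη ε
  have hmoli : Integrable (mol η ε) := mol_integrable hη hη_supp hε0
  have hsupp := mol_tsupport hη_supp hε0
  have hnn := mol_nonneg hη_nonneg hε0
  have key : ∀ x, (‖(∫ t, v t * mol η ε (x - t)) - v x‖₊ : ℝ≥0∞)
      ≤ S.indicator (fun _ => ENNReal.ofReal r) x := by
    intro x
    by_cases hx : x ∈ S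
    · rw [Set.indicator_of_mem hx]
      have hint1 : Integrable (fun t => v (x - t) * mol η ε t) := by
        apply Continuous.integrable_of_hasCompactSupport
        · exact (hv.comp (continuous_const.sub continuous_id)).mul hmolc
        · exact (mol_hcs hη_supp hε0).mul_left
      have hint2 : Integrable (fun t => v x * mol η ε t) := hmoli.const_mul _
      have e1 : ∫ t, v t * mol η ε (x - t) = ∫ t, v (x - t) * mol η ε t := by
        conv_lhs => rw [← integral_sub_left_eq_self (fun t => v t * mol η ε (x - t)) volume x]
        refine integral_congr_ae (Eventually.of_forall fun t => ?_)
        simp [sub_sub_cancel]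
      have e2 : v x = ∫ t, v x * mol η ε t := by
        rw [MeasureTheory.integral_const_mul, mol_integral hη_int hε0, mul_one]
      have e3 : (∫ t, v t * mol η ε (x - t)) - v x
          = ∫ t, (v (x - t) - v x) * mol η ε t := by
        rw [e1]; conv_lhs => rw [e2]
        rw [← integral_sub hint1 hint2]
        refine integral_congr_ae (Eventually.of_forall fun t => ?_)
        ring
      have hbd : ∀ t, ‖(v (x - t) - v x) * mol η ε t‖ ≤ r * mol η ε t := by
        intro t
        by_cases ht : mol η ε t = 0
        · rw [ht, mul_zero, mul_zero, norm_zero]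
        · have htm : t ∈ Set.Icc (-ε) ε := hsupp (subset_closure ht)
          have hd : dist (x - t) x < δ' := by
            rw [Real.dist_eq]
            simp only [Set.mem_Icc] at htm
            rw [show x - t - x = -t by ring, abs_neg]
            exact lt_of_le_of_lt (abs_le.mpr htm) hεδ'
          have hvv := hδ' hd
          rw [norm_mul, Real.norm_eq_abs (mol η ε t), abs_of_nonneg (hnn t)]
          refine mul_le_mul_of_nonneg_right ?_ (hnn t)
          rw [Real.norm_eq_abs, ← Real.dist_eq]
          exact hvv.le
      have habs : ‖∫ t, (v (x - t) - v x) * mol η ε t‖ ≤ r := by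
        have h := norm_integral_le_of_norm_le (hmoli.const_mul r)
          (Eventually.of_forall hbd)
        rwa [MeasureTheory.integral_const_mul, mol_integral hη_int hε0, mul_one] at h
      rw [e3, ← enorm_eq_nnnorm, ← ofReal_norm_eq_enorm]
      exact ENNReal.ofReal_le_ofReal habs
    · have hvx : v x = 0 := by
        apply image_eq_zero_of_notMem_tsupport
        exact fun hmem => hx (self_subset_cthickening (tsupport v) hmem)
      have hzero : ∀ t, v t * mol η ε (x - t) = 0 := by
        intro t
        by_cases hvt : v t = 0
        · simp [hvt]
        · have ht : t ∈ tsupport v := subset_closure hvt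
          have : mol η ε (x - t) = 0 := by
            by_contra h
            have hmem : x - t ∈ Set.Icc (-ε) ε := hsupp (subset_closure h)
            simp only [Set.mem_Icc] at hmem
            have : dist x t ≤ 1 := by
              rw [Real.dist_eq]
              rw [abs_le]
              constructor <;> linarith
            exact hx (mem_cthickening_of_dist_le x t 1 _ ht this)
          simp [this]
      have : (∫ t, v t * mol η ε (x - t)) = 0 := by
        rw [integral_congr_ae (Eventually.of_forall hzero)]; simp
      rw [this, hvx, sub_zero]
      simp
  calc ∫⁻ x, (‖(∫ t, v t * mol η ε (x - t)) - v x‖₊ : ℝ≥0∞)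
      ≤ ∫⁻ x, S.indicator (fun _ => ENNReal.ofReal r) x := lintegral_mono key
    _ = ENNReal.ofReal r * M := by
        rw [lintegral_indicator hScompact.isClosed.measurableSet]
        simp [hM, mul_comm]
    _ ≤ c := by
        rw [hr, ENNReal.ofReal_toReal hdivt]
        calc c' / (M + 1) * M ≤ c' / (M + 1) * (M + 1) :=
              mul_le_mul_right le_self_add _
          _ = c' := ENNReal.div_mul_cancel (by simp) hM1t
          _ ≤ c := min_le_left _ _

/-- `L¹` convergence of mollifications for integrable functions. -/
lemma mol_approx (hη : ContDiff ℝ (⊤ : ℕ∞) η) (hη_supp : tsupport η ⊆ Set.Icc (-1) 1)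
    (hη_nonneg : ∀ y, 0 ≤ η y) (hη_int : ∫ y, η y = 1)
    {u : ℝ → ℝ} (hu : Integrable u (volume : Measure ℝ)) :
    Tendsto (fun ε : ℝ => ∫⁻ x, ‖(∫ t, u t * mol η ε (x - t)) - u x‖₊) (𝓝[>] 0) (𝓝 0) := by
  rw [ENNReal.tendsto_nhds_zero]
  intro c hc
  set c' : ℝ≥0∞ := min c 1 with hc'
  have hc'0 : c' ≠ 0 := (lt_min hc zero_lt_one).ne'
  have hc't : c' ≠ ⊤ := by simp [hc']
  have h3pos : c' / 3 ≠ 0 := by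
    simp [ENNReal.div_eq_zero_iff, hc'0]
  obtain ⟨v, hvcs, hvclose, hvcont, hvint⟩ :=
    hu.exists_hasCompactSupport_lintegral_sub_le h3pos
  have hmid := mol_mid hη hη_supp hη_nonneg hη_int hvcont hvcs
  rw [ENNReal.tendsto_nhds_zero] at hmid
  filter_upwards [hmid (c' / 3) (pos_iff_ne_zero.mpr h3pos), self_mem_nhdsWithin]
    with ε hmidε hε0
  rw [Set.mem_Ioi] at hε0
  have hmolc := mol_cont hη ε
  obtain ⟨x₀, hx₀⟩ := (hmolc.norm).exists_forall_ge_of_hasCompactSupport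
    (mol_hcs hη_supp hε0).norm
  have hbd : ∀ x : ℝ, ∃ C, ∀ t : ℝ, ‖mol η ε (x - t)‖ ≤ C :=
    fun x => ⟨‖mol η ε x₀‖, fun t => hx₀ _⟩
  have hint_u : ∀ x : ℝ, Integrable (fun t => u t * mol η ε (x - t)) := by
    intro x
    have := hu.bdd_mul ((hmolc.comp (continuous_const.sub continuous_id : Continuous fun t => x - t)).aestronglyMeasurable)
      (Eventually.of_forall fun t => hx₀ _)
    exact this.congr (Eventually.of_forall fun t => mul_comm _ _)
  have hint_v : ∀ x : ℝ, Integrable (fun t => v t * mol η ε (x - t)) := by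
    intro x
    have := hvint.bdd_mul ((hmolc.comp (continuous_const.sub continuous_id : Continuous fun t => x - t)).aestronglyMeasurable)
      (Eventually.of_forall fun t => hx₀ _)
    exact this.congr (Eventually.of_forall fun t => mul_comm _ _)
  have decomp : ∀ x : ℝ, (∫ t, u t * mol η ε (x - t)) - u x
      = (∫ t, (u t - v t) * mol η ε (x - t))
        + (((∫ t, v t * mol η ε (x - t)) - v x) + (v x - u x)) := by
    intro x
    have : ∫ t, (u t - v t) * mol η ε (x - t)
        = (∫ t, u t * mol η ε (x - t)) - ∫ t, v t * mol η ε (x - t) := by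
      rw [← integral_sub (hint_u x) (hint_v x)]
      refine integral_congr_ae (Eventually.of_forall fun t => ?_); ring
    rw [this]; ring
  have hAcont : Continuous (fun x => ∫ t, (u t - v t) * mol η ε (x - t)) := by
    have := (mol_hcs hη_supp hε0).continuous_convolution_right (ContinuousLinearMap.mul ℝ ℝ)
      ((hu.sub hvint).locallyIntegrable) hmolc
    exact this.congr fun x => by simp [convolution_def, ContinuousLinearMap.mul_apply', Pi.sub_apply, sub_mul]
  have hBcont : Continuous (fun x => (∫ t, v t * mol η ε (x - t)) - v x) := by
    have := (mol_hcs hη_supp hε0).continuous_convolution_right (ContinuousLinearMap.mul ℝ ℝ)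
      hvint.locallyIntegrable hmolc
    replace this : Continuous (fun x => ∫ t, v t * mol η ε (x - t)) :=
      this.congr fun x => by simp [convolution_def, ContinuousLinearMap.mul_apply']
    exact this.sub hvcont
  calc ∫⁻ x, (‖(∫ t, u t * mol η ε (x - t)) - u x‖₊ : ℝ≥0∞)
      ≤ ∫⁻ x, ((‖∫ t, (u t - v t) * mol η ε (x - t)‖₊ : ℝ≥0∞)
          + ((‖(∫ t, v t * mol η ε (x - t)) - v x‖₊ : ℝ≥0∞) + (‖v x - u x‖₊ : ℝ≥0∞))) := by
        refine lintegral_mono fun x => ?_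
        rw [decomp x]
        refine le_trans (ENNReal.coe_le_coe.mpr
          ((nnnorm_add_le _ _).trans (add_le_add_right (nnnorm_add_le _ _) _))) ?_
        rw [ENNReal.coe_add, ENNReal.coe_add]
    _ = (∫⁻ x, ‖∫ t, (u t - v t) * mol η ε (x - t)‖₊)
        + ((∫⁻ x, ‖(∫ t, v t * mol η ε (x - t)) - v x‖₊) + ∫⁻ x, ‖v x - u x‖₊) := by
        rw [lintegral_add_left' hAcont.nnnorm.measurable.coe_nnreal_ennreal.aemeasurable,
          lintegral_add_left' hBcont.nnnorm.measurable.coe_nnreal_ennreal.aemeasurable]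
    _ ≤ c' / 3 + (c' / 3 + c' / 3) := by
        refine add_le_add ?_ (add_le_add hmidε ?_)
        · exact le_trans (mol_young hη hη_supp hη_nonneg hη_int hε0
            (hu.sub hvint).aestronglyMeasurable) hvclose
        · refine le_trans (le_of_eq (lintegral_congr fun x => ?_)) hvclose
          rw [show (‖v x - u x‖₊ : ℝ≥0∞) = (‖u x - v x‖₊ : ℝ≥0∞) by rw [← neg_sub, nnnorm_neg]]
          rfl
    _ = c' := by rw [← add_assoc]; exact ENNReal.add_thirds c'
    _ ≤ c := min_le_left _ _

/-- The derivative of the mollification equals the mollification of the weak derivative. -/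
lemma mol_deriv {U : Set ℝ} {f g : ℝ → ℝ}
    (hf : ∀ K : Set ℝ, IsCompact K → IntegrableOn f K volume)
    (hweak : ∀ φ : ℝ → ℝ, ContDiff ℝ (⊤ : ℕ∞) φ → HasCompactSupport φ → tsupport φ ⊆ U →
      ∫ y, g y * φ y = -∫ y, f y * deriv φ y)
    (hη_smooth : ContDiff ℝ (⊤ : ℕ∞) η) (hη_supp : tsupport η ⊆ Set.Icc (-1) 1)
    {K : Set ℝ} {δ : ℝ} (hδ : 0 < δ) (hKU' : cthickening δ K ⊆ U)
    {ε : ℝ} (hε0 : 0 < ε) (hεδ : ε ≤ δ) {x : ℝ} (hx : x ∈ K) :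
    deriv (fun z => ∫ y, ε⁻¹ * η (ε⁻¹ * (z - y)) * f y) x = ∫ t, g t * mol η ε (x - t) := by
  have hfl : LocallyIntegrable f volume := locallyIntegrable_iff.mpr hf
  have hfun : (fun z => ∫ y, ε⁻¹ * η (ε⁻¹ * (z - y)) * f y)
      = (f ⋆[ContinuousLinearMap.mul ℝ ℝ, volume] mol η ε) := by
    funext z
    simp only [convolution, ContinuousLinearMap.mul_apply']
    refine integral_congr_ae (Eventually.of_forall fun y => ?_)
    simp only [mol]; ring
  have hd := HasCompactSupport.hasDerivAt_convolution_right (ContinuousLinearMap.mul ℝ ℝ)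
    hfl (mol_hcs hη_supp hε0) ((mol_smooth hη_smooth ε).of_le (by simp)) x
  rw [hfun, hd.deriv]
  -- the derivative of the convolution is `f ⋆ (mol η ε)'`
  have hdconv : (f ⋆[ContinuousLinearMap.mul ℝ ℝ, volume] deriv (mol η ε)) x
      = ∫ t, f t * deriv (mol η ε) (x - t) := by
    simp only [convolution, ContinuousLinearMap.mul_apply']
  -- the test function
  set ψ : ℝ → ℝ := fun y => mol η ε (x - y) with hψ
  have hψs : ContDiff ℝ (⊤ : ℕ∞) ψ :=
    (mol_smooth hη_smooth ε).comp (contDiff_const.sub contDiff_id)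
  have hψsupp : tsupport ψ ⊆ closedBall x ε := by
    apply closure_minimal _ isClosed_closedBall
    intro y hy
    have : x - y ∈ tsupport (mol η ε) := subset_closure hy
    have hmem := mol_tsupport hη_supp hε0 this
    simp only [Set.mem_Icc] at hmem
    rw [mem_closedBall, Real.dist_eq, abs_le]
    constructor <;> linarith
  have hψcs : HasCompactSupport ψ :=
    HasCompactSupport.of_support_subset_isCompact (isCompact_closedBall x ε)
      ((subset_closure).trans hψsupp)
  have hψU : tsupport ψ ⊆ U := by
    refine hψsupp.trans (Set.Subset.trans ?_ hKU')
    intro y hy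
    rw [mem_closedBall] at hy
    exact mem_cthickening_of_dist_le y x δ K hx (hy.trans hεδ)
  have hw := hweak ψ hψs hψcs hψU
  have hmd : ∀ z, HasDerivAt (mol η ε) (deriv (mol η ε) z) z := fun z =>
    (((mol_smooth hη_smooth ε).differentiable (by simp)) z).hasDerivAt
  have hψderiv : ∀ y, deriv ψ y = -(deriv (mol η ε) (x - y)) := by
    intro y
    have hψd : HasDerivAt ψ (deriv (mol η ε) (x - y) * (-1)) y :=
      (hmd (x - y)).comp y ((hasDerivAt_id y).const_sub x)
    rw [hψd.deriv]; ring
  have hneg : ∫ y, f y * deriv ψ y = -∫ t, f t * deriv (mol η ε) (x - t) := by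
    rw [← integral_neg]
    refine integral_congr_ae (Eventually.of_forall fun y => ?_)
    show f y * deriv ψ y = -(f y * deriv (mol η ε) (x - y))
    rw [hψderiv y]; ring
  rw [hdconv, show (∫ t, f t * deriv (mol η ε) (x - t)) = - ∫ y, f y * deriv ψ y by
    rw [hneg]; ring, ← hw]

end molAux

/-- If `g` is a weak derivative of `f` on an open set `U ⊆ ℝ`, then the derivatives of the
mollifications `(η^ε * f)'` converge to `g` in `L¹_loc(U)` as `ε → 0⁺`. -/
theorem stmt7 (U : Set ℝ) (hU : IsOpen U) (f g : ℝ → ℝ)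
    (hf : ∀ K : Set ℝ, IsCompact K → IntegrableOn f K volume)
    (hg : ∀ K : Set ℝ, IsCompact K → IntegrableOn g K volume)
    (hweak : ∀ φ : ℝ → ℝ, ContDiff ℝ (⊤ : ℕ∞) φ → HasCompactSupport φ → tsupport φ ⊆ U →
      ∫ y, g y * φ y = -∫ y, f y * deriv φ y)
    (η : ℝ → ℝ) (hη_smooth : ContDiff ℝ (⊤ : ℕ∞) η) (hη_nonneg : ∀ y, 0 ≤ η y)
    (hη_supp : tsupport η ⊆ Set.Icc (-1) 1) (hη_int : ∫ y, η y = 1) :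
    ∀ K : Set ℝ, K ⊆ U → IsCompact K →
      Tendsto (fun ε : ℝ =>
          ∫ x in K, |deriv (fun z => ∫ y, ε⁻¹ * η (ε⁻¹ * (z - y)) * f y) x - g x|)
        (𝓝[>] 0) (𝓝 0) := by
  intro K hKU hK
  obtain ⟨δ, hδpos, hδU⟩ := hK.exists_cthickening_subset_open hU hKU
  set K' : Set ℝ := cthickening δ K with hK'def
  have hK'c : IsCompact K' := hK.cthickening
  have hKK' : K ⊆ K' := self_subset_cthickening K
  set g₀ : ℝ → ℝ := K'.indicator g with hg₀def
  have hg₀int : Integrable g₀ := (hg K' hK'c).integrable_indicator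
    (isClosed_cthickening.measurableSet)
  -- the lintegral of the approximation tends to 0
  have happrox := mol_approx hη_smooth hη_supp hη_nonneg hη_int hg₀int
  have hKlim : Tendsto (fun ε : ℝ => ∫⁻ x in K, ‖(∫ t, g₀ t * mol η ε (x - t)) - g₀ x‖₊)
      (𝓝[>] 0) (𝓝 0) := by
    refine tendsto_of_tendsto_of_tendsto_of_le_of_le tendsto_const_nhds happrox
      (fun ε => zero_le) (fun ε => ?_)
    exact lintegral_mono' Measure.restrict_le_self le_rfl
  have htoReal : Tendsto
      (fun ε : ℝ => (∫⁻ x in K, ‖(∫ t, g₀ t * mol η ε (x - t)) - g₀ x‖₊).toReal)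
      (𝓝[>] 0) (𝓝 0) := by
    have := (ENNReal.tendsto_toReal (by norm_num : (0 : ℝ≥0∞) ≠ ⊤)).comp hKlim
    exact this
  refine htoReal.congr' ?_
  -- eventual equality of the two expressions
  filter_upwards [Ioc_mem_nhdsGT_of_mem (Set.mem_Ico.mpr ⟨le_refl (0:ℝ), hδpos⟩)] with ε hε
  obtain ⟨hε0, hεδ⟩ := hε
  -- convolution with g equals convolution with g₀ at points of K
  have hgg₀ : ∀ x ∈ K, (∫ t, g t * mol η ε (x - t)) = ∫ t, g₀ t * mol η ε (x - t) := by
    intro x hx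
    refine integral_congr_ae (Eventually.of_forall fun t => ?_)
    by_cases ht : t ∈ K'
    · simp only [hg₀def, Set.indicator_of_mem ht]
    · have hmol : mol η ε (x - t) = 0 := by
        by_contra h
        have hmem := mol_tsupport hη_supp hε0 (subset_closure h)
        simp only [Set.mem_Icc] at hmem
        refine ht (mem_cthickening_of_dist_le t x δ K hx ?_)
        rw [Real.dist_eq, abs_le]
        constructor <;> linarith
      simp [hmol]
  have hderiv : ∀ x ∈ K,
      deriv (fun z => ∫ y, ε⁻¹ * η (ε⁻¹ * (z - y)) * f y) x
        = ∫ t, g₀ t * mol η ε (x - t) := by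
    intro x hx
    rw [mol_deriv hf hweak hη_smooth hη_supp hδpos hδU hε0 hεδ hx]
    exact hgg₀ x hx
  -- pointwise equality of integrands on K
  have hptwise : Set.EqOn
      (fun x => |deriv (fun z => ∫ y, ε⁻¹ * η (ε⁻¹ * (z - y)) * f y) x - g x|)
      (fun x => ‖(∫ t, g₀ t * mol η ε (x - t)) - g₀ x‖) K := by
    intro x hx
    simp only
    rw [hderiv x hx, Real.norm_eq_abs]
    simp only [hg₀def, Set.indicator_of_mem (hKK' hx)]
  rw [setIntegral_congr_fun hK.isClosed.measurableSet hptwise]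
  -- convert Bochner integral to lintegral
  have hconvcont : Continuous (fun x => ∫ t, g₀ t * mol η ε (x - t)) := by
    have := (mol_hcs hη_supp hε0).continuous_convolution_right (ContinuousLinearMap.mul ℝ ℝ)
      hg₀int.locallyIntegrable (mol_cont hη_smooth ε)
    exact this.congr fun x => by simp [convolution_def, ContinuousLinearMap.mul_apply']
  have hmeas : AEStronglyMeasurable
      (fun x => ‖(∫ t, g₀ t * mol η ε (x - t)) - g₀ x‖) ((volume : Measure ℝ).restrict K) :=
    (hconvcont.aestronglyMeasurable.sub (hg₀int.aestronglyMeasurable.restrict)).norm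
  rw [integral_eq_lintegral_of_nonneg_ae (Eventually.of_forall fun x => norm_nonneg _) hmeas]
  congr 1
  refine lintegral_congr fun x => ?_
  rw [← enorm_eq_nnnorm, ← ofReal_norm_eq_enorm]
end

section
/- Let f, g : ℝ → ℝ be locally integrable functions such that g is a weak derivative of f on ℝ, and suppose M ≥ 0 satisfies |g(z)| ≤ M for Lebesgue-almost every z ∈ ℝ. Let φ : ℝ → ℝ be a smooth compactly supported function with φ ≥ 0 and ∫ φ = 1. Then the convolution f * φ is Lipschitz with constant M: |(f * φ)(x) − (f * φ)(y)| ≤ M|x − y| for all x, y ∈ ℝ. -/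
open MeasureTheory Filter Metric Topology
open scoped Convolution

/-- If `g` is a weak derivative of `f` on `ℝ` and `|g| ≤ M` almost everywhere, then the
convolution `f * φ` with a nonnegative test function of integral one is Lipschitz with
constant `M`. -/
theorem stmt9 (f g : ℝ → ℝ)
    (hf : ∀ K : Set ℝ, IsCompact K → IntegrableOn f K volume)
    (hg : ∀ K : Set ℝ, IsCompact K → IntegrableOn g K volume)
    (hweak : ∀ ψ : ℝ → ℝ, ContDiff ℝ (⊤ : ℕ∞) ψ → HasCompactSupport ψ →
      ∫ y, g y * ψ y = -∫ y, f y * deriv ψ y)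
    (M : ℝ) (hM : 0 ≤ M) (hgM : ∀ᵐ z ∂volume, |g z| ≤ M)
    (φ : ℝ → ℝ) (hφ_smooth : ContDiff ℝ (⊤ : ℕ∞) φ) (hφ_supp : HasCompactSupport φ)
    (hφ_nonneg : ∀ y, 0 ≤ φ y) (hφ_int : ∫ y, φ y = 1) :
    ∀ x y : ℝ, |(∫ z, φ (x - z) * f z) - ∫ z, φ (y - z) * f z| ≤ M * |x - y| := by
  have hfl : LocallyIntegrable f volume := (locallyIntegrable_iff).2 hf
  have hgl : LocallyIntegrable g volume := (locallyIntegrable_iff).2 hg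
  set L := ContinuousLinearMap.mul ℝ ℝ with hL
  have hconv_eq : ∀ x : ℝ, (f ⋆[L] φ) x = ∫ z, φ (x - z) * f z := by
    intro x
    simp only [hL, convolution_def, ContinuousLinearMap.mul_apply']
    exact integral_congr_ae (Filter.Eventually.of_forall fun z => mul_comm _ _)
  -- the pointwise derivative
  have hderiv : ∀ x : ℝ, HasDerivAt (f ⋆[L] φ) (∫ z, g z * φ (x - z)) x := by
    intro x
    have h1 : HasDerivAt (f ⋆[L] φ) ((f ⋆[L] deriv φ) x) x :=
      hφ_supp.hasDerivAt_convolution_right L hfl (hφ_smooth.of_le (by simp)) x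
    have hψ : ∀ z : ℝ, HasDerivAt (fun z => φ (x - z)) (-(deriv φ (x - z))) z := by
      intro z
      have h2 : HasDerivAt (fun z : ℝ => x - z) (-1) z :=
        (hasDerivAt_id z).const_sub x
      have h3 : HasDerivAt φ (deriv φ (x - z)) (x - z) :=
        ((hφ_smooth.differentiable (by simp)) (x - z)).hasDerivAt
      have h4 := h3.comp z h2; rw [mul_neg_one] at h4; exact h4
    have hsmooth : ContDiff ℝ (⊤ : ℕ∞) (fun z => φ (x - z)) :=
      hφ_smooth.comp (contDiff_const.sub contDiff_id)
    have hsupp : HasCompactSupport (fun z => φ (x - z)) :=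
      hφ_supp.comp_homeomorph (Homeomorph.subLeft x)
    have hw := hweak (fun z => φ (x - z)) hsmooth hsupp
    have hderiv_eq : ∀ z : ℝ, deriv (fun z => φ (x - z)) z = -(deriv φ (x - z)) :=
      fun z => (hψ z).deriv
    rw [show (∫ y, f y * deriv (fun z => φ (x - z)) y) = -∫ y, f y * deriv φ (x - y) by
      rw [← integral_neg]; exact integral_congr_ae (Filter.Eventually.of_forall fun y => by
        simp only [hderiv_eq]; ring)] at hw
    simp only [neg_neg] at hw
    have : (f ⋆[L] deriv φ) x = ∫ z, g z * φ (x - z) := by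
      simp only [hL, convolution_def, ContinuousLinearMap.mul_apply']
      rw [← hw]
    rwa [this] at h1
  -- bound on the derivative
  have hbound : ∀ x : ℝ, ‖∫ z, g z * φ (x - z)‖ ≤ M := by
    intro x
    have hφx_cont : Continuous (fun z => φ (x - z)) :=
      hφ_smooth.continuous.comp (continuous_const.sub continuous_id)
    have hφx_supp : HasCompactSupport (fun z => φ (x - z)) :=
      hφ_supp.comp_homeomorph (Homeomorph.subLeft x)
    have hφx_int : Integrable (fun z => φ (x - z)) volume :=
      hφx_cont.integrable_of_hasCompactSupport hφx_supp
    have hMint : Integrable (fun z => M * φ (x - z)) volume := hφx_int.const_mul M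
    have hae : ∀ᵐ z ∂(volume : Measure ℝ), ‖g z * φ (x - z)‖ ≤ M * φ (x - z) := by
      filter_upwards [hgM] with z hz
      rw [norm_mul, Real.norm_eq_abs, Real.norm_eq_abs]
      exact mul_le_mul hz (le_of_eq (abs_of_nonneg (hφ_nonneg _))) (abs_nonneg _) hM
    have hmeas : AEStronglyMeasurable (fun z => g z * φ (x - z)) volume :=
      hgl.aestronglyMeasurable.mul hφx_cont.aestronglyMeasurable
    calc ‖∫ z, g z * φ (x - z)‖ ≤ ∫ z, M * φ (x - z) :=
          norm_integral_le_of_norm_le hMint hae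
      _ = M * ∫ z, φ (x - z) := integral_const_mul M _
      _ = M * ∫ z, φ z := by rw [integral_sub_left_eq_self φ volume x]
      _ = M := by rw [hφ_int, mul_one]
  intro x y
  have key : ‖(f ⋆[L] φ) x - (f ⋆[L] φ) y‖ ≤ M * ‖x - y‖ := by
    apply Convex.norm_image_sub_le_of_norm_hasDerivWithin_le
      (fun z _ => (hderiv z).hasDerivWithinAt) (fun z _ => hbound z)
      convex_univ (Set.mem_univ y) (Set.mem_univ x)
  rw [hconv_eq x, hconv_eq y] at key
  simpa [Real.norm_eq_abs] using key
end

section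
/- Define f : ℝ → ℝ by f(x) = x² sin(1/x) for x ≠ 0 and f(0) = 0. Then f cannot be written as the difference of two convex functions: there do not exist convex functions g, h : ℝ → ℝ with f = g − h. -/
open MeasureTheory Filter Topology

noncomputable def pp (k : ℕ) : ℝ := 1 / ((2 * k + 1 / 2) * Real.pi)
noncomputable def qq (k : ℕ) : ℝ := 1 / ((2 * k + 3 / 2) * Real.pi)

lemma uden_pos (k : ℕ) : (0 : ℝ) < (2 * k + 1 / 2) * Real.pi := by
  have := Real.pi_pos; positivity

lemma vden_pos (k : ℕ) : (0 : ℝ) < (2 * k + 3 / 2) * Real.pi := by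
  have := Real.pi_pos; positivity

lemma pp_pos (k : ℕ) : 0 < pp k := by
  have := uden_pos k; unfold pp; positivity

lemma qq_pos (k : ℕ) : 0 < qq k := by
  have := vden_pos k; unfold qq; positivity

lemma qq_lt_pp (k : ℕ) : qq k < pp k := by
  unfold pp qq
  apply one_div_lt_one_div_of_lt (uden_pos k)
  have := Real.pi_pos
  nlinarith

lemma pp_succ_lt_qq (k : ℕ) : pp (k + 1) < qq k := by
  unfold pp qq
  apply one_div_lt_one_div_of_lt (vden_pos k)
  have := Real.pi_pos
  push_cast
  nlinarith

lemma sin_pp (k : ℕ) : Real.sin (1 / pp k) = 1 := by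
  have h : (1 : ℝ) / pp k = (2 * k + 1 / 2) * Real.pi := by
    rw [pp, one_div_one_div]
  rw [h]
  have : (2 * (k : ℝ) + 1 / 2) * Real.pi = Real.pi / 2 + (k : ℕ) * (2 * Real.pi) := by
    push_cast; ring
  rw [this, Real.sin_add_nat_mul_two_pi, Real.sin_pi_div_two]

lemma sin_qq (k : ℕ) : Real.sin (1 / qq k) = -1 := by
  have h : (1 : ℝ) / qq k = (2 * k + 3 / 2) * Real.pi := by
    rw [qq, one_div_one_div]
  rw [h]
  have : (2 * (k : ℝ) + 3 / 2) * Real.pi = (Real.pi + Real.pi / 2) + (k : ℕ) * (2 * Real.pi) := by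
    push_cast; ring
  rw [this, Real.sin_add_nat_mul_two_pi, Real.sin_add, Real.sin_pi, Real.cos_pi,
    Real.sin_pi_div_two]
  ring

lemma aux1 {u v : ℝ} (hu : 0 < u) (hv : v = u + Real.pi) :
    1 / Real.pi ≤ ((1 / u) ^ 2 + (1 / v) ^ 2) / (1 / u - 1 / v) := by
  have hπ := Real.pi_pos
  have hv0 : 0 < v := by rw [hv]; linarith
  have hd : 0 < 1 / u - 1 / v := by
    have : 1 / v < 1 / u := one_div_lt_one_div_of_lt hu (by rw [hv]; linarith)
    linarith
  rw [div_le_div_iff₀ hπ hd]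
  have h1 : 1 / u - 1 / v = Real.pi / (u * v) := by
    field_simp; rw [hv]; ring
  rw [h1, one_mul, div_le_iff₀ (by positivity : (0:ℝ) < u * v)]
  have h2 : ((1 / u) ^ 2 + (1 / v) ^ 2) * Real.pi * (u * v) =
      (v / u + u / v) * Real.pi := by field_simp
  rw [h2]
  have h3 : (2 : ℝ) ≤ v / u + u / v := by
    rw [div_add_div _ _ (ne_of_gt hu) (ne_of_gt hv0), le_div_iff₀ (by positivity)]
    nlinarith [sq_nonneg (u - v)]
  nlinarith

lemma aux2 {v u : ℝ} (hv : 0 < v) (hu : u = v + Real.pi) :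
    (-(1 / v) ^ 2 - (1 / u) ^ 2) / (1 / v - 1 / u) ≤ -(1 / Real.pi) := by
  have hπ := Real.pi_pos
  have hu0 : 0 < u := by rw [hu]; linarith
  have hd : 0 < 1 / v - 1 / u := by
    have : 1 / u < 1 / v := one_div_lt_one_div_of_lt hv (by rw [hu]; linarith)
    linarith
  rw [div_le_iff₀ hd, neg_mul, le_neg]
  have h3 : -(-(1 / v) ^ 2 - (1 / u) ^ 2) = (1 / v) ^ 2 + (1 / u) ^ 2 := by ring
  rw [h3]
  have h1 : 1 / v - 1 / u = Real.pi / (v * u) := by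
    field_simp; rw [hu]; ring
  have h2 : (1 / Real.pi) * (Real.pi / (v * u)) = 1 / (v * u) := by
    field_simp
  rw [h1, h2]
  have h4 : (1 / v) ^ 2 ≤ (1 / v) ^ 2 + (1 / u) ^ 2 :=
    le_add_of_nonneg_right (by positivity)
  have h5 : 1 / (v * u) ≤ (1 / v) ^ 2 := by
    rw [div_pow, one_pow, div_le_div_iff₀ (by positivity) (by positivity)]
    nlinarith
  linarith

/-- The function `f(x) = x² sin(1/x)` (with `f(0) = 0`) cannot be written as the
difference of two convex functions on `ℝ`. -/
theorem stmt12 :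
    ¬ ∃ g h : ℝ → ℝ, ConvexOn ℝ Set.univ g ∧ ConvexOn ℝ Set.univ h ∧
      ∀ x : ℝ, (if x = 0 then (0 : ℝ) else x ^ 2 * Real.sin (1 / x)) = g x - h x := by
  rintro ⟨g, h, hg, hh, hf⟩
  have hπ := Real.pi_pos
  -- values of f at pp k and qq k
  have fp : ∀ k : ℕ, g (pp k) - h (pp k) = (pp k) ^ 2 := by
    intro k
    have := hf (pp k)
    rw [if_neg (ne_of_gt (pp_pos k)), sin_pp, mul_one] at this
    linarith
  have fq : ∀ k : ℕ, g (qq k) - h (qq k) = -(qq k) ^ 2 := by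
    intro k
    have := hf (qq k)
    rw [if_neg (ne_of_gt (qq_pos k)), sin_qq] at this
    linarith
  set Sh : ℝ → ℝ → ℝ := fun a b => (h b - h a) / (b - a) with hSh
  set Sg : ℝ → ℝ → ℝ := fun a b => (g b - g a) / (b - a) with hSg
  -- key step
  have key : ∀ k : ℕ, Sh (qq (k + 1)) (pp (k + 1)) + 2 / Real.pi ≤ Sh (qq k) (pp k) := by
    intro k
    set a := qq (k + 1)
    set b := pp (k + 1)
    set c := qq k
    set d := pp k
    have hab : a < b := qq_lt_pp (k + 1)
    have hbc : b < c := pp_succ_lt_qq k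
    have hcd : c < d := qq_lt_pp k
    -- slope identities for f
    have e1 : Sg a b - Sh a b = (b ^ 2 + a ^ 2) / (b - a) := by
      show (g b - g a) / (b - a) - (h b - h a) / (b - a) = _
      rw [div_sub_div_same]
      congr 1
      linarith [fp (k + 1), fq (k + 1)]
    have e2 : Sg b c - Sh b c = (-c ^ 2 - b ^ 2) / (c - b) := by
      show (g c - g b) / (c - b) - (h c - h b) / (c - b) = _
      rw [div_sub_div_same]
      congr 1
      linarith [fp (k + 1), fq k]
    -- numeric slope bounds
    have lb1 : 1 / Real.pi ≤ (b ^ 2 + a ^ 2) / (b - a) := by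
      have := aux1 (u := (2 * (k + 1 : ℕ) + 1 / 2) * Real.pi)
        (v := (2 * (k + 1 : ℕ) + 3 / 2) * Real.pi) (uden_pos (k + 1)) (by push_cast; ring)
      have hb : b = 1 / ((2 * (k + 1 : ℕ) + 1 / 2) * Real.pi) := rfl
      have ha : a = 1 / ((2 * (k + 1 : ℕ) + 3 / 2) * Real.pi) := rfl
      rw [hb, ha]
      exact this
    have ub2 : (-c ^ 2 - b ^ 2) / (c - b) ≤ -(1 / Real.pi) := by
      have := aux2 (v := (2 * (k : ℕ) + 3 / 2) * Real.pi)
        (u := (2 * ((k : ℕ) + 1) + 1 / 2) * Real.pi) (vden_pos k) (by push_cast; ring)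
      have hc : c = 1 / ((2 * (k : ℕ) + 3 / 2) * Real.pi) := rfl
      have hb : b = 1 / ((2 * ((k : ℕ) + 1) + 1 / 2) * Real.pi) := by
        rw [show b = pp (k + 1) from rfl, pp]; push_cast; ring_nf
      rw [hc, hb]
      exact this
    -- convexity slope monotonicity
    have mg : Sg a b ≤ Sg b c :=
      hg.slope_mono_adjacent (Set.mem_univ a) (Set.mem_univ c) hab hbc
    have mh : Sh b c ≤ Sh c d :=
      hh.slope_mono_adjacent (Set.mem_univ b) (Set.mem_univ d) hbc hcd
    have two_div : (2 : ℝ) / Real.pi = 1 / Real.pi + 1 / Real.pi := by ring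
    linarith [e1, e2]
  -- iterate
  have iter : ∀ N : ℕ, Sh (qq N) (pp N) + 2 * N / Real.pi ≤ Sh (qq 0) (pp 0) := by
    intro N
    induction N with
    | zero => simp
    | succ n ih =>
      have := key n
      have hcast : 2 * ((n : ℝ) + 1) / Real.pi = 2 * n / Real.pi + 2 / Real.pi := by
        field_simp
      push_cast
      rw [hcast]
      linarith
  -- uniform bounds
  have hpp0_lt_two : pp 0 < 2 := by
    rw [pp]
    have h1 : (1 : ℝ) < (2 * (0 : ℕ) + 1 / 2) * Real.pi := by
      push_cast
      nlinarith [Real.pi_gt_three]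
    calc 1 / ((2 * (0:ℕ) + 1 / 2) * Real.pi) < 1 / 1 := by
          apply one_div_lt_one_div_of_lt one_pos h1
      _ < 2 := by norm_num
  have U : Sh (qq 0) (pp 0) ≤ Sh (pp 0) 2 :=
    hh.slope_mono_adjacent (Set.mem_univ _) (Set.mem_univ _) (qq_lt_pp 0) hpp0_lt_two
  have L : ∀ N : ℕ, Sh (-1) 0 ≤ Sh (qq N) (pp N) := by
    intro N
    have h1 : Sh (-1) 0 ≤ Sh 0 (qq N) :=
      hh.slope_mono_adjacent (Set.mem_univ _) (Set.mem_univ _) (by norm_num) (qq_pos N)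
    have h2 : Sh 0 (qq N) ≤ Sh (qq N) (pp N) :=
      hh.slope_mono_adjacent (Set.mem_univ _) (Set.mem_univ _) (qq_pos N) (qq_lt_pp N)
    linarith
  -- contradiction
  obtain ⟨N, hN⟩ := exists_nat_gt ((Sh (pp 0) 2 - Sh (-1) 0) * Real.pi / 2)
  have h1 := iter N
  have h2 := L N
  have h3 : (Sh (pp 0) 2 - Sh (-1) 0) < 2 * N / Real.pi := by
    rw [lt_div_iff₀ hπ]
    nlinarith
  linarith
end
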